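/- arXiv:2201.05800 — 5 statements merged into one kernel-verified Lean document; each statement's English description precedes it below -/
import Mathlib

section
/- Let n ≥ 2 and let (M, D) be an SBP pair of n×n real matrices with D 𝟙 = 0. Then the matrix D + M⁻¹ e₁ e₁ᵀ is invertible if and only if D is null-space consistent, i.e. the kernel of D equals the span of the all-ones vector 𝟙. -/
open Matrix

/-- First standard basis vector of ℝⁿ. -/
noncomputable def e1 (n : ℕ) : Fin n → ℝ := fun i => if (i : ℕ) = 0 then 1 else 0

/-- Last standard basis vector of ℝⁿ. -/
noncomputable def elast (n : ℕ) : Fin n → ℝ := fun i => if (i : ℕ) = n - 1 then 1 else 0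

/-- The all-ones vector of ℝⁿ. -/
noncomputable def ones (n : ℕ) : Fin n → ℝ := fun _ => 1

/-- The boundary matrix B = e_n e_nᵀ − e₁ e₁ᵀ. -/
noncomputable def Bmat (n : ℕ) : Matrix (Fin n) (Fin n) ℝ :=
  Matrix.vecMulVec (elast n) (elast n) - Matrix.vecMulVec (e1 n) (e1 n)

/-- (M, D) is an SBP pair: M diagonal with positive entries and M D + (M D)ᵀ = B. -/
def IsSBPPair (n : ℕ) (M D : Matrix (Fin n) (Fin n) ℝ) : Prop :=
  (∃ d : Fin n → ℝ, M = Matrix.diagonal d ∧ ∀ i, 0 < d i) ∧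
    M * D + (M * D)ᵀ = Bmat n

lemma vmv_mulVec (n : ℕ) (u v x : Fin n → ℝ) : vecMulVec u v *ᵥ x = (v ⬝ᵥ x) • u := by
  ext i
  simp [Matrix.mulVec, Matrix.vecMulVec_apply, dotProduct, Finset.mul_sum, mul_comm,
    mul_assoc, mul_left_comm]

lemma e1_single (n : ℕ) (hn : 2 ≤ n) : e1 n = Pi.single (⟨0, by omega⟩ : Fin n) 1 := by
  funext i
  by_cases h : (i : ℕ) = 0
  · have hi : i = ⟨0, by omega⟩ := Fin.ext h
    rw [hi]; simp [e1]
  · have hi : i ≠ ⟨0, by omega⟩ := fun hh => h (by simp [hh])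
    simp [e1, h, Pi.single_apply, hi]

lemma elast_single (n : ℕ) (hn : 2 ≤ n) :
    elast n = Pi.single (⟨n - 1, by omega⟩ : Fin n) 1 := by
  funext i
  by_cases h : (i : ℕ) = n - 1
  · have hi : i = ⟨n - 1, by omega⟩ := Fin.ext h
    rw [hi]; simp [elast]
  · have hi : i ≠ ⟨n - 1, by omega⟩ := fun hh => h (by simp [hh])
    simp [elast, h, Pi.single_apply, hi]

theorem stmt1 (n : ℕ) (hn : 2 ≤ n)
    (M D : Matrix (Fin n) (Fin n) ℝ)
    (hSBP : IsSBPPair n M D)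
    (hcons : D *ᵥ ones n = 0) :
    IsUnit (D + M⁻¹ * Matrix.vecMulVec (e1 n) (e1 n)) ↔
      LinearMap.ker D.mulVecLin = Submodule.span ℝ {ones n} := by
  obtain ⟨⟨d, hMd, hdpos⟩, hB⟩ := hSBP
  set i0 : Fin n := ⟨0, by omega⟩ with hi0
  set iN : Fin n := ⟨n - 1, by omega⟩ with hiN
  have he1 : e1 n = Pi.single i0 1 := e1_single n hn
  have heN : elast n = Pi.single iN 1 := elast_single n hn
  have hMdet : IsUnit M.det := by
    rw [hMd, Matrix.det_diagonal]
    exact isUnit_iff_ne_zero.2 (Finset.prod_ne_zero_iff.2 fun i _ => (hdpos i).ne')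
  have hMM : M * M⁻¹ = 1 := Matrix.mul_nonsing_inv M hMdet
  set A := D + M⁻¹ * Matrix.vecMulVec (e1 n) (e1 n) with hA
  set w : Fin n → ℝ := M⁻¹ *ᵥ e1 n with hw
  -- action of A on a vector
  have hAx : ∀ x : Fin n → ℝ, A *ᵥ x = D *ᵥ x + x i0 • w := by
    intro x
    rw [hA, Matrix.add_mulVec, ← Matrix.mulVec_mulVec, vmv_mulVec, Matrix.mulVec_smul]
    congr 2
    rw [he1, single_dotProduct, one_mul]
  -- A applied to ones
  have hAones : A *ᵥ ones n = w := by
    rw [hAx, hcons, zero_add]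
    show (ones n i0 : ℝ) • w = w
    simp [ones]
  -- key: if A *ᵥ x = 0 then x i0 = 0 and D *ᵥ x = 0
  have hkey : ∀ x : Fin n → ℝ, A *ᵥ x = 0 → x i0 = 0 ∧ D *ᵥ x = 0 := by
    intro x hx0
    have hDx : D *ᵥ x = -(x i0 • w) :=
      eq_neg_of_add_eq_zero_left ((hAx x).symm.trans hx0)
    have hMDx : (M * D) *ᵥ x = -(x i0 • e1 n) := by
      rw [← Matrix.mulVec_mulVec, hDx, Matrix.mulVec_neg, Matrix.mulVec_smul, hw,
        Matrix.mulVec_mulVec, hMM, Matrix.one_mulVec]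
    have hsym : x ⬝ᵥ ((M * D)ᵀ *ᵥ x) = x ⬝ᵥ ((M * D) *ᵥ x) := by
      rw [dotProduct_mulVec, vecMul_transpose, dotProduct_comm]
    have h2 := congrArg (fun N => x ⬝ᵥ (N *ᵥ x)) hB
    simp only [Matrix.add_mulVec, dotProduct_add, hsym, Bmat, Matrix.sub_mulVec,
      dotProduct_sub, vmv_mulVec, hMDx] at h2
    rw [he1, heN] at h2
    simp only [single_dotProduct, one_mul, dotProduct_neg, dotProduct_smul,
      dotProduct_single, mul_one, smul_eq_mul] at h2
    have hx00 : x i0 = 0 := by nlinarith [sq_nonneg (x i0), sq_nonneg (x iN)]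
    refine ⟨hx00, ?_⟩
    rw [hDx, hx00, zero_smul, neg_zero]
  rw [Matrix.isUnit_iff_isUnit_det, isUnit_iff_ne_zero, Ne,
    ← Matrix.exists_mulVec_eq_zero_iff]
  constructor
  · intro hnex
    apply le_antisymm
    · intro x hx
      have hDx : D *ᵥ x = 0 := by
        simpa [Matrix.mulVecLin_apply] using (LinearMap.mem_ker.mp hx)
      have hker : A *ᵥ (x - x i0 • ones n) = 0 := by
        rw [Matrix.mulVec_sub, Matrix.mulVec_smul, hAones, hAx, hDx, zero_add, sub_self]
      have hz : x - x i0 • ones n = 0 := by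
        by_contra h
        exact hnex ⟨_, h, hker⟩
      exact Submodule.mem_span_singleton.2 ⟨x i0, (sub_eq_zero.mp hz).symm⟩
    · rw [Submodule.span_le, Set.singleton_subset_iff]
      exact LinearMap.mem_ker.2 (by simpa [Matrix.mulVecLin_apply] using hcons)
  · rintro hker ⟨x, hx0, hAx0⟩
    obtain ⟨hxi0, hDx⟩ := hkey x hAx0
    have hxmem : x ∈ Submodule.span ℝ {ones n} := by
      rw [← hker]
      exact LinearMap.mem_ker.2 (by simpa [Matrix.mulVecLin_apply] using hDx)
    obtain ⟨c, hc⟩ := Submodule.mem_span_singleton.mp hxmem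
    apply hx0
    have hc0 : c = 0 := by
      have := congrArg (fun v => v i0) hc
      simpa [ones, hxi0] using this
    rw [← hc, hc0, zero_smul]
end

section
/- Let n ≥ 2 and let (M, D) be an SBP pair of n×n real matrices with D 𝟙 = 0. Then 𝟙ᵀ M (D + M⁻¹ e₁ e₁ᵀ) = e_nᵀ; consequently, if D + M⁻¹ e₁ e₁ᵀ is invertible, then e_nᵀ (D + M⁻¹ e₁ e₁ᵀ)⁻¹ = 𝟙ᵀ M. -/
open Matrix

theorem stmt3 (n : ℕ) (hn : 2 ≤ n)
    (M D : Matrix (Fin n) (Fin n) ℝ)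
    (hSBP : IsSBPPair n M D)
    (hcons : D *ᵥ ones n = 0) :
    ones n ᵥ* (M * (D + M⁻¹ * Matrix.vecMulVec (e1 n) (e1 n))) = elast n ∧
      (IsUnit (D + M⁻¹ * Matrix.vecMulVec (e1 n) (e1 n)) →
        elast n ᵥ* (D + M⁻¹ * Matrix.vecMulVec (e1 n) (e1 n))⁻¹ = ones n ᵥ* M) := by
  classical
  obtain ⟨⟨d, hM, hd⟩, hB⟩ := hSBP
  set V := Matrix.vecMulVec (e1 n) (e1 n) with hV
  have hdetM : IsUnit M.det := by
    rw [hM, Matrix.det_diagonal]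
    exact (Finset.prod_pos (fun i _ => hd i)).ne'.isUnit
  have hMinv : M * M⁻¹ = 1 := Matrix.mul_nonsing_inv M hdetM
  have hMA : M * (D + M⁻¹ * V) = M * D + V := by
    rw [Matrix.mul_add, ← Matrix.mul_assoc, hMinv, Matrix.one_mul]
  -- ones ᵥ* vecMulVec u v = (ones ⬝ᵥ u) • v
  have hsum : ∀ u v : Fin n → ℝ, ones n ᵥ* Matrix.vecMulVec u v
      = (∑ i, u i) • v := by
    intro u v
    funext j
    simp [Matrix.vecMul, Matrix.vecMulVec, dotProduct, ones, Finset.sum_mul,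
      Pi.smul_apply, smul_eq_mul, Finset.sum_mul]
  have hnpos : 0 < n := by omega
  have hsum_e1 : (∑ i, e1 n i) = 1 := by
    rw [Finset.sum_eq_single (⟨0, hnpos⟩ : Fin n)]
    · simp [e1]
    · intro b _ hb
      simp only [e1, ite_eq_right_iff]
      intro h0
      exact absurd (Fin.ext h0) hb
    · simp
  have hsum_el : (∑ i, elast n i) = 1 := by
    rw [Finset.sum_eq_single (⟨n - 1, by omega⟩ : Fin n)]
    · simp [elast]
    · intro b _ hb
      simp only [elast, ite_eq_right_iff]
      intro h0
      exact absurd (Fin.ext h0) hb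
    · simp
  have hMD0 : (M * D) *ᵥ ones n = 0 := by
    rw [← Matrix.mulVec_mulVec, hcons, Matrix.mulVec_zero]
  have hMDeq : M * D = Bmat n - (M * D)ᵀ := by
    rw [← hB]; abel
  have h1 : ones n ᵥ* (M * (D + M⁻¹ * V)) = elast n := by
    rw [hMA, Matrix.vecMul_add, hMDeq, Matrix.vecMul_sub, Matrix.vecMul_transpose, hMD0]
    rw [Bmat, Matrix.vecMul_sub, hsum, hsum, hsum_e1, hsum_el]
    funext j
    simp
  refine ⟨h1, fun hU => ?_⟩
  have hdetA : IsUnit (D + M⁻¹ * V).det := (Matrix.isUnit_iff_isUnit_det _).mp hU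
  have hAinv : (D + M⁻¹ * V) * (D + M⁻¹ * V)⁻¹ = 1 :=
    Matrix.mul_nonsing_inv _ hdetA
  calc elast n ᵥ* (D + M⁻¹ * V)⁻¹
      = (ones n ᵥ* (M * (D + M⁻¹ * V))) ᵥ* (D + M⁻¹ * V)⁻¹ := by rw [h1]
    _ = ones n ᵥ* (M * (D + M⁻¹ * V) * (D + M⁻¹ * V)⁻¹) := by
        rw [Matrix.vecMul_vecMul]
    _ = ones n ᵥ* M := by rw [Matrix.mul_assoc, hAinv, Matrix.mul_one]
end

section
/- Let n ≥ 2, m ≥ 1, let (M, D) be an SBP pair of n×n real matrices, let Δt ∈ ℝ, and let U, U*, F be n×m real matrices. Then the weak-form equation B U* − Dᵀ M U = (Δt/2) M F holds if and only if the strong-form equation D U = M⁻¹ B (U − U*) + (Δt/2) F holds. -/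
open Matrix

theorem stmt4 (n m : ℕ) (hn : 2 ≤ n) (hm : 1 ≤ m)
    (M D : Matrix (Fin n) (Fin n) ℝ)
    (hSBP : IsSBPPair n M D)
    (Δt : ℝ)
    (U Ustar F : Matrix (Fin n) (Fin m) ℝ) :
    Bmat n * Ustar - Dᵀ * M * U = (Δt / 2) • (M * F) ↔
      D * U = M⁻¹ * Bmat n * (U - Ustar) + (Δt / 2) • F := by
  obtain ⟨⟨d, hM, hd⟩, hB⟩ := hSBP
  have hMT : Mᵀ = M := by rw [hM, Matrix.diagonal_transpose]
  have h1 : Dᵀ * M = Bmat n - M * D := by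
    have ht : (M * D)ᵀ = Dᵀ * M := by rw [Matrix.transpose_mul, hMT]
    rw [← ht, eq_sub_iff_add_eq, add_comm]
    exact hB
  have hunit : IsUnit M.det := by
    rw [hM, Matrix.det_diagonal]
    exact isUnit_iff_ne_zero.mpr (ne_of_gt (Finset.prod_pos fun i _ => hd i))
  have hMl : M⁻¹ * M = 1 := Matrix.nonsing_inv_mul M hunit
  have hMr : M * M⁻¹ = 1 := Matrix.mul_nonsing_inv M hunit
  constructor
  · intro h
    rw [h1] at h
    have hmid : M * (D * U) = Bmat n * (U - Ustar) + (Δt / 2) • (M * F) := by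
      rw [← h, Matrix.mul_sub, Matrix.sub_mul, Matrix.mul_assoc]; abel
    calc D * U = M⁻¹ * M * (D * U) := by rw [hMl, Matrix.one_mul]
      _ = M⁻¹ * (Bmat n * (U - Ustar) + (Δt / 2) • (M * F)) := by
          rw [Matrix.mul_assoc, hmid]
      _ = M⁻¹ * Bmat n * (U - Ustar) + (Δt / 2) • F := by
          rw [Matrix.mul_add, Matrix.mul_smul, ← Matrix.mul_assoc, ← Matrix.mul_assoc, hMl,
            Matrix.one_mul]
  · intro h
    rw [h1]
    have hmid : M * (D * U) = Bmat n * (U - Ustar) + (Δt / 2) • (M * F) := by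
      rw [h, Matrix.mul_add, Matrix.mul_smul, ← Matrix.mul_assoc, ← Matrix.mul_assoc, hMr,
        Matrix.one_mul]
    calc Bmat n * Ustar - (Bmat n - M * D) * U
        = M * (D * U) - Bmat n * (U - Ustar) := by
          rw [Matrix.mul_sub, Matrix.sub_mul, Matrix.mul_assoc]; abel
      _ = (Δt / 2) • (M * F) := by rw [hmid, add_sub_cancel_left]
end

section
/- Let n ≥ 2, m ≥ 1, let (M, D) be an SBP pair of n×n real matrices with D 𝟙 = 0 such that K := D + M⁻¹ e₁ e₁ᵀ is invertible, and set A := (1/2) K⁻¹. Let Δt ∈ ℝ, let uⁿ ∈ ℝᵐ, let U, F be n×m real matrices, and let U* be the n×m matrix whose first row is (uⁿ)ᵀ, whose last row equals the last row of U, and whose remaining rows are zero (the upwind flux). Then the DG-SEM-in-time system B U* − Dᵀ M U = (Δt/2) M F holds if and only if the Runge–Kutta stage system U = 𝟙 (uⁿ)ᵀ + Δt · A F holds. -/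
open Matrix

lemma vmv_mul {n m : ℕ} (a b : Fin n → ℝ) (X : Matrix (Fin n) (Fin m) ℝ) :
    Matrix.vecMulVec a b * X = Matrix.vecMulVec a (b ᵥ* X) := by
  ext i j
  simp [Matrix.mul_apply, Matrix.vecMulVec_apply, Matrix.vecMul, dotProduct,
    Finset.mul_sum, mul_assoc]

lemma mul_vmv {n m : ℕ} (X : Matrix (Fin n) (Fin n) ℝ) (a : Fin n → ℝ) (b : Fin m → ℝ) :
    X * Matrix.vecMulVec a b = Matrix.vecMulVec (X *ᵥ a) b := by
  ext i j
  simp [Matrix.mul_apply, Matrix.vecMulVec_apply, Matrix.mulVec, dotProduct,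
    Finset.sum_mul, mul_assoc]

lemma e1_vecMul {n m : ℕ} (hn : 2 ≤ n) (X : Matrix (Fin n) (Fin m) ℝ) :
    e1 n ᵥ* X = fun j => X ⟨0, by omega⟩ j := by
  ext j
  simp only [Matrix.vecMul, dotProduct, e1, ite_mul, one_mul, zero_mul]
  rw [Finset.sum_eq_single (⟨0, by omega⟩ : Fin n)]
  · simp
  · intro b _ hb
    rw [if_neg]
    intro h; exact hb (Fin.ext h)
  · simp

lemma elast_vecMul {n m : ℕ} (hn : 2 ≤ n) (X : Matrix (Fin n) (Fin m) ℝ) :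
    elast n ᵥ* X = fun j => X ⟨n - 1, by omega⟩ j := by
  ext j
  simp only [Matrix.vecMul, dotProduct, elast, ite_mul, one_mul, zero_mul]
  rw [Finset.sum_eq_single (⟨n - 1, by omega⟩ : Fin n)]
  · simp
  · intro b _ hb
    rw [if_neg]
    intro h; exact hb (Fin.ext h)
  · simp

theorem stmt5 (n m : ℕ) (hn : 2 ≤ n) (hm : 1 ≤ m)
    (M D : Matrix (Fin n) (Fin n) ℝ)
    (hSBP : IsSBPPair n M D)
    (hcons : D *ᵥ ones n = 0)
    (hK : IsUnit (D + M⁻¹ * Matrix.vecMulVec (e1 n) (e1 n)))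
    (Δt : ℝ) (un : Fin m → ℝ)
    (U F Ustar : Matrix (Fin n) (Fin m) ℝ)
    -- the upwind flux: first row is (uⁿ)ᵀ, last row is the last row of U, other rows vanish
    (hUstar : ∀ i j, Ustar i j =
      if (i : ℕ) = 0 then un j else if (i : ℕ) = n - 1 then U i j else 0) :
    Bmat n * Ustar - Dᵀ * M * U = (Δt / 2) • (M * F) ↔
      U = Matrix.vecMulVec (ones n) un +
        Δt • ((((1 : ℝ) / 2) • (D + M⁻¹ * Matrix.vecMulVec (e1 n) (e1 n))⁻¹) * F) := by
  obtain ⟨⟨d, hMd, hd⟩, hSBPeq⟩ := hSBP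
  set K := D + M⁻¹ * Matrix.vecMulVec (e1 n) (e1 n) with hKdef
  -- M is invertible
  have hMdet : M.det ≠ 0 := by
    rw [hMd, Matrix.det_diagonal]
    exact ne_of_gt (Finset.prod_pos (fun i _ => hd i))
  have hMMinv : M * M⁻¹ = 1 := Matrix.mul_nonsing_inv M (isUnit_iff_ne_zero.mpr hMdet)
  have hMinvM : M⁻¹ * M = 1 := Matrix.nonsing_inv_mul M (isUnit_iff_ne_zero.mpr hMdet)
  have hMu : IsUnit M := (Matrix.isUnit_iff_isUnit_det M).mpr (isUnit_iff_ne_zero.mpr hMdet)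
  -- K is invertible
  have hKdet : K.det ≠ 0 := by
    have := (Matrix.isUnit_iff_isUnit_det K).mp hK
    exact isUnit_iff_ne_zero.mp this
  have hKKinv : K * K⁻¹ = 1 := Matrix.mul_nonsing_inv K (isUnit_iff_ne_zero.mpr hKdet)
  have hKinvK : K⁻¹ * K = 1 := Matrix.nonsing_inv_mul K (isUnit_iff_ne_zero.mpr hKdet)
  -- first row of Ustar
  have hrow0 : e1 n ᵥ* Ustar = un := by
    rw [e1_vecMul hn]
    ext j
    simp [hUstar]
  have hrowlast : elast n ᵥ* Ustar = elast n ᵥ* U := by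
    rw [elast_vecMul hn, elast_vecMul hn]
    ext j
    rw [hUstar]
    have : n - 1 ≠ 0 := by omega
    simp [this]
  -- key identity for the DG side
  have hDtM : Dᵀ * M = Bmat n - M * D := by
    have hMsymm : Mᵀ = M := by rw [hMd, Matrix.diagonal_transpose]
    calc Dᵀ * M = (M * D)ᵀ := by rw [Matrix.transpose_mul, hMsymm]
    _ = Bmat n - M * D := eq_sub_of_add_eq' hSBPeq
  have hMK : M * K = M * D + Matrix.vecMulVec (e1 n) (e1 n) := by
    rw [hKdef, Matrix.mul_add, ← Matrix.mul_assoc, hMMinv, Matrix.one_mul]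
  have keyL : Bmat n * Ustar - Dᵀ * M * U
      = M * K * U - Matrix.vecMulVec (e1 n) un := by
    have h1 : Bmat n * Ustar
        = Matrix.vecMulVec (elast n) (elast n) * U - Matrix.vecMulVec (e1 n) un := by
      rw [Bmat, Matrix.sub_mul, vmv_mul, vmv_mul, hrow0, hrowlast, ← vmv_mul]
    rw [h1, hDtM, hMK, Bmat, Matrix.sub_mul, Matrix.sub_mul, Matrix.add_mul]
    abel
  -- key identity for the RK side
  have hK1 : K * Matrix.vecMulVec (ones n) un = M⁻¹ * Matrix.vecMulVec (e1 n) un := by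
    rw [hKdef, Matrix.add_mul, mul_vmv, hcons, Matrix.mul_assoc, vmv_mul]
    have : e1 n ᵥ* Matrix.vecMulVec (ones n) un = un := by
      rw [e1_vecMul hn]
      ext j
      simp [Matrix.vecMulVec_apply, ones]
    rw [this]
    have h0 : Matrix.vecMulVec (0 : Fin n → ℝ) un = 0 := by
      ext i j; simp [Matrix.vecMulVec_apply]
    rw [h0, zero_add]
  have keyR : K * (Matrix.vecMulVec (ones n) un + Δt • (((1 : ℝ) / 2) • K⁻¹ * F))
      = M⁻¹ * Matrix.vecMulVec (e1 n) un + (Δt / 2) • F := by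
    rw [Matrix.mul_add, hK1, Matrix.mul_smul, Matrix.smul_mul, Matrix.mul_smul,
      ← Matrix.mul_assoc, hKKinv, Matrix.one_mul, smul_smul]
    ring_nf
  constructor
  · intro h
    rw [keyL, sub_eq_iff_eq_add'] at h
    -- h : M * K * U = vecMulVec e1 un + (Δt/2) • (M * F)
    have h2 : M * (K * U) = M * (M⁻¹ * Matrix.vecMulVec (e1 n) un + (Δt / 2) • F) := by
      rw [Matrix.mul_add, Matrix.mul_smul, ← Matrix.mul_assoc M M⁻¹, hMMinv, Matrix.one_mul,
        ← Matrix.mul_assoc, h]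
    have h3 := congrArg (fun X => M⁻¹ * X) h2
    simp only [← Matrix.mul_assoc, hMinvM, Matrix.one_mul] at h3
    rw [← keyR] at h3
    have h4 := congrArg (fun X => K⁻¹ * X) h3
    simp only [← Matrix.mul_assoc, hKinvK, Matrix.one_mul] at h4
    exact h4
  · intro h
    rw [keyL, sub_eq_iff_eq_add', h, Matrix.mul_assoc, keyR, Matrix.mul_add,
      ← Matrix.mul_assoc M M⁻¹, hMMinv, Matrix.one_mul, Matrix.mul_smul]
end

section
/- Let n ≥ 2, m ≥ 1, let (M, D) be an SBP pair of n×n real matrices with D 𝟙 = 0 such that K := D + M⁻¹ e₁ e₁ᵀ is invertible, and set A := (1/2) K⁻¹ and b := (1/2) M 𝟙. Let Δt ∈ ℝ, uⁿ ∈ ℝᵐ, and let U, F be n×m real matrices satisfying U = 𝟙 (uⁿ)ᵀ + Δt · A F. Then the last row of U equals (uⁿ)ᵀ + Δt · bᵀ F; that is, the final DG-SEM stage coincides with the Runge–Kutta update uⁿ⁺¹ = uⁿ + Δt Σⱼ bⱼ Fⱼ. -/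
open Matrix

lemma vecMul_vecMulVec' (n : ℕ) (v w x : Fin n → ℝ) :
    v ᵥ* Matrix.vecMulVec w x = (v ⬝ᵥ w) • x := by
  funext j
  simp only [Matrix.vecMul, Matrix.vecMulVec, dotProduct, Matrix.of_apply, Pi.smul_apply,
    smul_eq_mul, Finset.sum_mul]
  exact Finset.sum_congr rfl fun i _ => by ring

lemma ones_dot_e1 (n : ℕ) (hn : 2 ≤ n) : ones n ⬝ᵥ e1 n = 1 := by
  simp only [dotProduct, ones, e1, one_mul]
  rw [Finset.sum_eq_single (⟨0, by omega⟩ : Fin n)]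
  · simp
  · intro b _ hb
    exact if_neg fun h => hb (Fin.ext h)
  · simp

lemma ones_dot_elast (n : ℕ) (hn : 2 ≤ n) : ones n ⬝ᵥ elast n = 1 := by
  simp only [dotProduct, ones, elast, one_mul]
  rw [Finset.sum_eq_single (⟨n-1, by omega⟩ : Fin n)]
  · simp
  · intro b _ hb
    exact if_neg fun h => hb (Fin.ext h)
  · simp

theorem stmt6 (n m : ℕ) (hn : 2 ≤ n) (hm : 1 ≤ m)
    (M D : Matrix (Fin n) (Fin n) ℝ)
    (hSBP : IsSBPPair n M D)
    (hcons : D *ᵥ ones n = 0)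
    (hK : IsUnit (D + M⁻¹ * Matrix.vecMulVec (e1 n) (e1 n)))
    (Δt : ℝ) (un : Fin m → ℝ)
    (U F : Matrix (Fin n) (Fin m) ℝ)
    (hU : U = Matrix.vecMulVec (ones n) un +
      Δt • ((((1 : ℝ) / 2) • (D + M⁻¹ * Matrix.vecMulVec (e1 n) (e1 n))⁻¹) * F)) :
    U ⟨n - 1, by omega⟩ = un + Δt • ((((1 : ℝ) / 2) • (M *ᵥ ones n)) ᵥ* F) := by
  obtain ⟨⟨d, hMd, hd⟩, hB⟩ := hSBP
  set E := Matrix.vecMulVec (e1 n) (e1 n) with hE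
  set K := D + M⁻¹ * E with hKdef
  have hMdet : IsUnit M.det := by
    rw [hMd, Matrix.det_diagonal]
    exact isUnit_iff_ne_zero.mpr
      (Finset.prod_ne_zero_iff.mpr fun i _ => (hd i).ne')
  have hMK : M * K = M * D + E := by
    rw [hKdef, Matrix.mul_add, ← Matrix.mul_assoc, Matrix.mul_nonsing_inv _ hMdet,
      Matrix.one_mul]
  have h1 : (ones n ᵥ* M) ᵥ* K = elast n := by
    rw [Matrix.vecMul_vecMul, hMK]
    have hMD : M * D = Bmat n - (M * D)ᵀ := eq_sub_of_add_eq hB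
    rw [Matrix.vecMul_add, hMD, Matrix.vecMul_sub]
    have h2 : ones n ᵥ* (M * D)ᵀ = 0 := by
      rw [Matrix.vecMul_transpose, ← Matrix.mulVec_mulVec, hcons, Matrix.mulVec_zero]
    rw [h2, Bmat, Matrix.vecMul_sub, hE]
    simp only [vecMul_vecMulVec']
    rw [ones_dot_e1 n hn, ones_dot_elast n hn]
    simp
  have hKd : IsUnit K.det := (Matrix.isUnit_iff_isUnit_det K).mp hK
  have h3 : elast n ᵥ* K⁻¹ = ones n ᵥ* M := by
    rw [← h1, Matrix.vecMul_vecMul, Matrix.mul_nonsing_inv _ hKd, Matrix.vecMul_one]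
  have hMsymm : ones n ᵥ* M = M *ᵥ ones n := by
    rw [hMd]
    funext i
    simp [Matrix.vecMul_diagonal, Matrix.mulVec_diagonal, mul_comm]
  have hrow : ∀ (X : Matrix (Fin n) (Fin n) ℝ), elast n ᵥ* X = X ⟨n-1, by omega⟩ := by
    intro X
    funext j
    simp only [Matrix.vecMul, dotProduct, elast]
    rw [Finset.sum_eq_single (⟨n-1, by omega⟩ : Fin n)]
    · simp
    · intro b _ hb
      rw [if_neg, zero_mul]
      intro h
      exact hb (Fin.ext h)
    · simp
  have hKrow : K⁻¹ ⟨n-1, by omega⟩ = M *ᵥ ones n := by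
    rw [← hrow K⁻¹, h3, hMsymm]
  subst hU
  funext j
  simp only [Matrix.add_apply, Matrix.smul_apply, Matrix.vecMulVec_apply, ones, one_mul,
    Pi.add_apply, Pi.smul_apply, Matrix.mul_apply, smul_eq_mul, Matrix.vecMul,
    dotProduct, hKrow]
end
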